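/- arXiv:1208.2730 — 4 statements merged into one kernel-verified Lean document; each statement's English description precedes it below -/
import Mathlib

section
/- Let b and c be nonnegative integers and let (n_1, …, n_j) be a sequence of positive integers with n_1 + n_2 + … + n_j = b + 3c. Then (n_1, …, n_j) is (b,c)-reachable if and only if neither of the following holds: (1) b = 0, j = 2, and n_2 = 1; (2) b = 0, j = 3, n_2 = 2, and n_3 = 1. -/
/-- Add `d` dots to column `i`. -/
def addDots {j : ℕ} (i : Fin j) (d : ℕ) (f : Fin j → ℕ) : Fin j → ℕ :=
  Function.update f i (f i + d)

/-- `DotReachable b c n` means that the dot configuration `n` on `j` columns can be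
produced by a play of the game consisting of exactly `b` moves of type (1) and exactly
`c` further moves, each of type (2), (3), or (4):
(1) add one dot to any one column; (2) add one dot to each of three distinct columns;
(3) choose columns `i < i'` and add one dot to column `i` and two dots to column `i'`;
(4) add three dots to a single column. -/
inductive DotReachable {j : ℕ} : ℕ → ℕ → (Fin j → ℕ) → Prop
  | init : DotReachable 0 0 (fun _ => 0)
  | move1 {b c : ℕ} {f : Fin j → ℕ} (i : Fin j) :
      DotReachable b c f → DotReachable (b + 1) c (addDots i 1 f)
  | move2 {b c : ℕ} {f : Fin j → ℕ} (i₁ i₂ i₃ : Fin j)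
      (h₁₂ : i₁ ≠ i₂) (h₁₃ : i₁ ≠ i₃) (h₂₃ : i₂ ≠ i₃) :
      DotReachable b c f →
        DotReachable b (c + 1) (addDots i₁ 1 (addDots i₂ 1 (addDots i₃ 1 f)))
  | move3 {b c : ℕ} {f : Fin j → ℕ} (i i' : Fin j) (h : i < i') :
      DotReachable b c f → DotReachable b (c + 1) (addDots i 1 (addDots i' 2 f))
  | move4 {b c : ℕ} {f : Fin j → ℕ} (i : Fin j) :
      DotReachable b c f → DotReachable b (c + 1) (addDots i 3 f)

/-!
Moves of type (1) commute with all others, so `n` is `(b, c)`-reachable as soon as some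
`(0, c)`-reachable configuration `u ≤ n` exists: the `b` spare dots are then placed freely.
With at least four columns such a `u` is found by strong induction on `c`: if the columns
capped at height `c` still hold `3c` dots, a configuration with at most `c` dots per column
is built from moves of type (2) alone; otherwise a column of height more than `c` absorbs a move
of type (4). With two or three columns the `(0, c)`-reachable configurations are characterised
exactly: besides the sum, the only obstructions are a last column holding one dot (two columns),
resp. the patterns `(·, 1, 0)`, `(0, ·, 1)`, `(·, 0, 1)` and `(·, 2, 1)` (three columns). For
positive `n` a suitable `u` avoids them unless `b = 0` and `n` itself ends in `1`, resp. `(2, 1)`.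
-/

open Finset

theorem Finset.exists_le_sum_eq {ι : Type*} [Fintype ι] [DecidableEq ι] {f : ι → ℕ} {m : ℕ}
    (hm : m ≤ ∑ i, f i) : ∃ g ≤ f, ∑ i, g i = m := by
  induction m with
  | zero => exact ⟨0, fun _ => Nat.zero_le _, by simp⟩
  | succ m ih =>
    obtain ⟨g, hgf, rfl⟩ := ih (by omega)
    obtain ⟨i, -, hi⟩ := exists_lt_of_sum_lt (s := univ) (f := g) (g := f) (by omega)
    refine ⟨g + Pi.single i 1, fun k => ?_, by simp [sum_add_distrib]⟩
    by_cases hk : k = i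
    · subst hk; simpa using hi
    · simpa [hk] using hgf k

theorem Pi.single_le_iff {ι M : Type*} [DecidableEq ι] [AddCommMonoid M] [PartialOrder M]
    [CanonicallyOrderedAdd M] {f : ι → M} {i : ι} {a : M} : Pi.single i a ≤ f ↔ a ≤ f i := by
  refine ⟨fun h => by simpa using h i, fun h k => ?_⟩
  by_cases hk : k = i
  · subst hk; simpa using h
  · simp [hk]

theorem addDots_eq_add_single {j : ℕ} (i : Fin j) (d : ℕ) (f : Fin j → ℕ) :
    addDots i d f = f + Pi.single i d := by
  ext k
  by_cases hk : k = i
  · subst hk; simp [addDots]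
  · simp [addDots, hk]

namespace DotReachable

variable {j b c : ℕ} {f g n u : Fin j → ℕ}

theorem zero : DotReachable (j := j) 0 0 0 := init

theorem sum_eq (h : DotReachable b c f) : ∑ k, f k = b + 3 * c := by
  induction h <;> simp only [addDots_eq_add_single, Pi.add_apply, sum_add_distrib,
    sum_pi_single', mem_univ, if_true, sum_const_zero] <;> omega

theorem add {b' c' : ℕ} (hf : DotReachable b c f) (hg : DotReachable b' c' g) :
    DotReachable (b + b') (c + c') (f + g) := by
  induction hg with
  | init => simpa [Pi.add_def] using hf
  | move1 i _ ih => simpa [addDots_eq_add_single, add_assoc] using ih.move1 i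
  | move2 i₁ i₂ i₃ h₁₂ h₁₃ h₂₃ _ ih =>
    simpa [addDots_eq_add_single, add_assoc] using ih.move2 i₁ i₂ i₃ h₁₂ h₁₃ h₂₃
  | move3 i i' h _ ih => simpa [addDots_eq_add_single, add_assoc] using ih.move3 i i' h
  | move4 i _ ih => simpa [addDots_eq_add_single, add_assoc] using ih.move4 i

theorem of_sum_eq (h : ∑ k, f k = b) : DotReachable b 0 f := by
  induction b generalizing f with
  | zero =>
    obtain rfl : f = 0 := funext fun k => (sum_eq_zero_iff.mp h) k (mem_univ k)
    exact zero
  | succ b ih =>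
    obtain ⟨i, -, hi⟩ := exists_ne_zero_of_sum_ne_zero (h.trans_ne b.succ_ne_zero)
    have hle : Pi.single i 1 ≤ f := Pi.single_le_iff.2 (Nat.one_le_iff_ne_zero.2 hi)
    have hsum : ∑ k, (f - Pi.single i 1 : Fin j → ℕ) k = b := by
      simp [sum_tsub_distrib univ fun k _ => hle k, h]
    simpa [addDots_eq_add_single, tsub_add_cancel_of_le hle] using (ih hsum).move1 i

theorem of_le (hu : DotReachable 0 c u) (hle : u ≤ n) (hn : ∑ k, n k = b + 3 * c) :
    DotReachable b c n := by
  have hsum : ∑ k, (n - u) k = b := by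
    simp only [Pi.sub_apply, sum_tsub_distrib univ fun k _ => hle k, hn, hu.sum_eq]
    omega
  simpa [tsub_add_cancel_of_le hle] using (of_sum_eq hsum).add hu

theorem move2_of_card_eq_three {s : Finset (Fin j)} (hs : #s = 3) (h : DotReachable b c f) :
    DotReachable b (c + 1) (f + fun k => if k ∈ s then 1 else 0) := by
  obtain ⟨x, y, z, hxy, hxz, hyz, rfl⟩ := card_eq_three.mp hs
  convert h.move2 x y z hxy hxz hyz using 1
  ext k
  simp only [addDots_eq_add_single, Pi.add_apply, Pi.single_apply, mem_insert, mem_singleton]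
  split_ifs <;> simp_all

theorem of_sum_eq_of_le (hsum : ∑ k, u k = 3 * c) (hle : ∀ k, u k ≤ c) :
    DotReachable 0 c u := by
  induction c generalizing u with
  | zero =>
    obtain rfl : u = 0 := funext fun k => Nat.le_zero.mp (hle k)
    exact zero
  | succ c ih =>
    -- Remove one dot from three nonempty columns, including every column of height `c + 1`.
    set full := univ.filter fun k => u k = c + 1
    set supp := univ.filter fun k => u k ≠ 0
    have hfull : #full * (c + 1) ≤ 3 * (c + 1) := by
      calc #full * (c + 1) = ∑ k ∈ full, u k := by
            rw [sum_congr rfl fun k hk => (mem_filter.mp hk).2, sum_const, smul_eq_mul]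
        _ ≤ ∑ k, u k := sum_le_sum_of_subset (subset_univ _)
        _ = 3 * (c + 1) := hsum
    have hsupp : 3 * (c + 1) ≤ #supp * (c + 1) := by
      calc 3 * (c + 1) = ∑ k ∈ supp, u k := by rw [← hsum, sum_filter_ne_zero]
        _ ≤ #supp • (c + 1) := sum_le_card_nsmul _ _ _ fun k _ => hle k
        _ = #supp * (c + 1) := smul_eq_mul _ _
    obtain ⟨s, hfs, hss, hs⟩ := exists_subsuperset_card_eq (s := full) (t := supp) (n := 3)
      (fun k hk => by simp_all [full, supp]) (le_of_mul_le_mul_right hfull c.succ_pos)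
      (le_of_mul_le_mul_right hsupp c.succ_pos)
    set v : Fin j → ℕ := fun k => if k ∈ s then 1 else 0
    have hvu : v ≤ u := fun k => by
      by_cases hk : k ∈ s
      · simpa [v, hk, supp, Nat.one_le_iff_ne_zero] using hss hk
      · simp [v, hk]
    have hv : ∑ k, v k = 3 := by simp [v, hs]
    refine tsub_add_cancel_of_le hvu ▸ move2_of_card_eq_three hs (ih ?_ fun k => ?_)
    · simp only [Pi.sub_apply, sum_tsub_distrib univ fun k _ => hvu k, hsum, hv]
      omega
    · by_cases hk : k ∈ s
      · simp [v, hk]; have := hle k; omega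
      · have : k ∉ full := fun h => hk (hfs h)
        simp [v, hk, full] at this ⊢; have := hle k; omega

theorem single_three_mul (i : Fin j) (c : ℕ) : DotReachable 0 c (Pi.single i (3 * c)) := by
  induction c with
  | zero => simpa using zero
  | succ c ih => simpa [addDots_eq_add_single, mul_add, ← Pi.single_add] using ih.move4 i

theorem single_add_single {i i' : Fin j} (hii' : i < i') {c y : ℕ} (hy : y ≤ 3 * c)
    (hy1 : y ≠ 1) : DotReachable 0 c (Pi.single i (3 * c - y) + Pi.single i' y) := by
  induction c generalizing y with
  | zero => simpa [show y = 0 by omega] using zero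
  | succ c ih =>
    have hne : i' ≠ i := hii'.ne'
    obtain rfl | rfl | rfl | hy3 : y = 0 ∨ y = 2 ∨ y = 4 ∨ 3 ≤ y ∧ y ≠ 4 := by omega
    · convert (ih (y := 0) (by omega) (by omega)).move4 i using 1
      ext k; by_cases hk : k = i <;> simp [addDots_eq_add_single, hk]; omega
    · convert (ih (y := 0) (by omega) (by omega)).move3 i i' hii' using 1
      ext k; by_cases hk : k = i <;> by_cases hk' : k = i' <;>
        simp [addDots_eq_add_single, hk, hk', hne] <;> omega
    · convert (ih (y := 2) (by omega) (by omega)).move3 i i' hii' using 1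
      ext k; by_cases hk : k = i <;> by_cases hk' : k = i' <;>
        simp [addDots_eq_add_single, hk, hk', hne] <;> omega
    · convert (ih (y := y - 3) (by omega) (by omega)).move4 i' using 1
      ext k; by_cases hk : k = i <;> by_cases hk' : k = i' <;>
        simp [addDots_eq_add_single, hk, hk', hne] <;> omega

theorem exists_le_move4 {k : Fin j} (hk : 3 ≤ n k)
    (h : ∃ u ≤ n - Pi.single k 3, DotReachable 0 c u) : ∃ u ≤ n, DotReachable 0 (c + 1) u := by
  obtain ⟨u, hu, hreach⟩ := h
  exact ⟨u + Pi.single k 3, (le_tsub_iff_right (Pi.single_le_iff.2 hk)).1 hu,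
    by simpa [addDots_eq_add_single] using hreach.move4 k⟩

theorem exists_le_two_of_four_le (hj : 4 ≤ j) (hpos : ∀ k, 0 < n k) {k₀ : Fin j}
    (hk₀ : 3 ≤ n k₀) : ∃ u ≤ n, DotReachable 0 2 u := by
  obtain ⟨s, hs, hcard⟩ := exists_subset_card_eq (s := univ.erase k₀) (n := 3) (by simp; omega)
  refine ⟨Pi.single k₀ 3 + fun k => if k ∈ s then 1 else 0, fun k => ?_, ?_⟩
  · by_cases hk : k = k₀
    · have : k₀ ∉ s := fun h => (mem_erase.mp (hs h)).1 rfl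
      subst hk; simpa [this] using hk₀
    · simp only [Pi.add_apply, Pi.single_apply, hk, if_false, zero_add]
      have := hpos k
      split_ifs <;> omega
  · simpa using move2_of_card_eq_three hcard (single_three_mul k₀ 1)

theorem exists_le_of_four_le (hj : 4 ≤ j) (hpos : ∀ k, 0 < n k) (hn : 3 * c ≤ ∑ k, n k) :
    ∃ u ≤ n, DotReachable 0 c u := by
  induction c using Nat.strong_induction_on generalizing n with
  | _ c ih =>
  by_cases hspread : 3 * c ≤ ∑ k, min (n k) c
  · obtain ⟨u, hu, hsum⟩ := exists_le_sum_eq hspread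
    exact ⟨u, fun k => (hu k).trans (min_le_left _ _),
      of_sum_eq_of_le hsum fun k => (hu k).trans (min_le_right _ _)⟩
  obtain ⟨k₀, hk₀⟩ : ∃ k, c < n k := by
    by_contra! h
    exact hspread (by simpa [min_eq_left (h _)] using hn)
  have hc : 2 ≤ c := by
    by_contra! hc
    refine hspread ?_
    calc 3 * c ≤ j * c := Nat.mul_le_mul_right c (by omega)
      _ = ∑ _k : Fin j, c := by simp
      _ ≤ ∑ k, min (n k) c := sum_le_sum fun k _ => le_min (by have := hpos k; omega) le_rfl
  by_cases h4 : 4 ≤ n k₀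
  · obtain ⟨c, rfl⟩ : ∃ c', c = c' + 1 := ⟨c - 1, by omega⟩
    have hle : Pi.single k₀ 3 ≤ n := Pi.single_le_iff.2 (by omega)
    refine exists_le_move4 (k := k₀) (by omega) (ih c (by omega) (fun k => ?_) ?_)
    · by_cases hk : k = k₀
      · subst hk; simp; omega
      · simpa [hk] using hpos k
    · simp only [Pi.sub_apply, sum_tsub_distrib univ fun k _ => hle k, sum_pi_single',
        mem_univ, if_true]
      omega
  · obtain rfl : c = 2 := by omega
    exact exists_le_two_of_four_le hj hpos hk₀

theorem fin_two_iff {n : Fin 2 → ℕ} : DotReachable 0 c n ↔ n 0 + n 1 = 3 * c ∧ n 1 ≠ 1 := by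
  refine ⟨fun h => ⟨by simpa using h.sum_eq, ?_⟩, fun ⟨hsum, h1⟩ => ?_⟩
  · generalize hb : 0 = b at h
    induction h with
    | init => simp
    | move1 => omega
    | move2 i₁ i₂ i₃ h₁₂ h₁₃ h₂₃ => fin_cases i₁ <;> fin_cases i₂ <;> fin_cases i₃ <;> simp_all
    | move3 i i' hii' _ ih =>
      subst hb; fin_cases i <;> fin_cases i' <;> simp_all [addDots_eq_add_single]
    | move4 i _ ih => subst hb; fin_cases i <;> simp_all [addDots_eq_add_single]
  · convert single_add_single Fin.zero_lt_one (c := c) (y := n 1) (by omega) h1 using 1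
    ext k; fin_cases k <;> simp; omega

section Vec3

variable {x y z : ℕ}

theorem move2_vec3 (h : DotReachable b c ![x, y, z]) :
    DotReachable b (c + 1) ![x + 1, y + 1, z + 1] := by
  convert h.move2 0 1 2 (by decide) (by decide) (by decide) using 1
  ext k; fin_cases k <;> simp [addDots_eq_add_single, -Matrix.cons_add]

theorem move3_vec3_zero_two (h : DotReachable b c ![x, y, z]) :
    DotReachable b (c + 1) ![x + 1, y, z + 2] := by
  convert h.move3 0 2 (by decide) using 1
  ext k; fin_cases k <;> simp [addDots_eq_add_single, -Matrix.cons_add]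

theorem move3_vec3_one_two (h : DotReachable b c ![x, y, z]) :
    DotReachable b (c + 1) ![x, y + 1, z + 2] := by
  convert h.move3 1 2 (by decide) using 1
  ext k; fin_cases k <;> simp [addDots_eq_add_single, -Matrix.cons_add]

theorem move4_vec3_two (h : DotReachable b c ![x, y, z]) :
    DotReachable b (c + 1) ![x, y, z + 3] := by
  convert h.move4 2 using 1
  ext k; fin_cases k <;> simp [addDots_eq_add_single, -Matrix.cons_add]

theorem of_vec3 (hsum : x + y + z = 3 * c) (h0 : z = 0 → y ≠ 1)
    (h1 : z = 1 → x ≠ 0 ∧ y ≠ 0 ∧ y ≠ 2) : DotReachable 0 c ![x, y, z] := by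
  induction z using Nat.strong_induction_on generalizing x y c with
  | _ z ih =>
  obtain rfl | hz := eq_or_ne z 0
  · convert single_add_single (show (0 : Fin 3) < 1 by decide) (c := c) (y := y) (by omega)
      (h0 rfl) using 1
    ext k; fin_cases k <;> simp; omega
  obtain ⟨c, rfl⟩ : ∃ c', c = c' + 1 := ⟨c - 1, by omega⟩
  obtain rfl | hz24 | ⟨rfl, rfl⟩ | hz3 : z = 1 ∨ (z = 2 ∨ z = 4) ∨ (z = 3 ∧ y = 1) ∨
      (3 ≤ z ∧ z ≠ 4 ∧ (z = 3 → y ≠ 1)) := by omega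
  · obtain ⟨⟨x, rfl⟩, ⟨y, rfl⟩⟩ : (∃ x', x = x' + 1) ∧ ∃ y', y = y' + 1 :=
      ⟨⟨x - 1, by omega⟩, ⟨y - 1, by omega⟩⟩
    exact move2_vec3 (ih 0 (by omega) (by omega) (by omega) (by omega))
  · obtain ⟨z, rfl⟩ : ∃ z', z = z' + 2 := ⟨z - 2, by omega⟩
    by_cases hxy : x = 0 ∨ y = 1
    · obtain ⟨y, rfl⟩ : ∃ y', y = y' + 1 := ⟨y - 1, by omega⟩
      exact move3_vec3_one_two (ih z (by omega) (by omega) (by omega) (by omega))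
    · obtain ⟨x, rfl⟩ : ∃ x', x = x' + 1 := ⟨x - 1, by omega⟩
      exact move3_vec3_zero_two (ih z (by omega) (by omega) (by omega) (by omega))
  · obtain ⟨x, rfl⟩ : ∃ x', x = x' + 1 := ⟨x - 1, by omega⟩
    exact move2_vec3 (ih 2 (by omega) (by omega) (by omega) (by omega))
  · obtain ⟨z, rfl⟩ : ∃ z', z = z' + 3 := ⟨z - 3, by omega⟩
    exact move4_vec3_two (ih z (by omega) (by omega) (by omega) (by omega))

end Vec3

theorem fin_three_iff {n : Fin 3 → ℕ} : DotReachable 0 c n ↔ n 0 + n 1 + n 2 = 3 * c ∧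
    (n 2 = 0 → n 1 ≠ 1) ∧ (n 2 = 1 → n 0 ≠ 0 ∧ n 1 ≠ 0 ∧ n 1 ≠ 2) := by
  refine ⟨fun h => ⟨by simpa [Fin.sum_univ_three] using h.sum_eq, ?_⟩,
    fun ⟨hsum, h0, h1⟩ => ?_⟩
  · generalize hb : 0 = b at h
    induction h with
    | init => simp
    | move1 => omega
    | move2 i₁ i₂ i₃ h₁₂ h₁₃ h₂₃ _ ih =>
      subst hb
      fin_cases i₁ <;> fin_cases i₂ <;> fin_cases i₃ <;> simp_all [addDots_eq_add_single]
    | move3 i i' hii' _ ih =>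
      subst hb; fin_cases i <;> fin_cases i' <;> simp_all [addDots_eq_add_single]
    | move4 i _ ih => subst hb; fin_cases i <;> simp_all [addDots_eq_add_single]
  · convert of_vec3 hsum h0 h1 using 1
    ext k; fin_cases k <;> rfl

theorem fin_two_iff_of_pos {n : Fin 2 → ℕ} (hpos : ∀ k, 0 < n k)
    (hsum : n 0 + n 1 = b + 3 * c) : DotReachable b c n ↔ (b = 0 → n 1 ≠ 1) := by
  refine ⟨fun h hb => (fin_two_iff.1 (hb ▸ h)).2, fun hb => ?_⟩
  have key (y : ℕ) (hy : y ≤ n 1 ∧ 3 * c - y ≤ n 0 ∧ y ≤ 3 * c ∧ y ≠ 1) : DotReachable b c n :=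
    of_le ((fin_two_iff (n := ![3 * c - y, y])).2 ⟨by simp; omega, by simpa using hy.2.2.2⟩)
      (fun k => by fin_cases k <;> simp [hy]) (by simpa using hsum)
  have := hpos 1
  by_cases h1 : n 1 = 1
  · exact key 0 (by omega)
  · exact key (min (n 1) (3 * c)) (by omega)

theorem fin_three_iff_of_pos {n : Fin 3 → ℕ} (hpos : ∀ k, 0 < n k)
    (hsum : n 0 + n 1 + n 2 = b + 3 * c) :
    DotReachable b c n ↔ (b = 0 → n 1 = 2 → n 2 ≠ 1) := by
  refine ⟨fun h hb h1 h2 => ((fin_three_iff.1 (hb ▸ h)).2.2 h2).2.2 h1, fun hb => ?_⟩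
  have key (x y z : ℕ) (h : x ≤ n 0 ∧ y ≤ n 1 ∧ z ≤ n 2 ∧ x + y + z = 3 * c ∧
      (z = 0 → y ≠ 1) ∧ (z = 1 → x ≠ 0 ∧ y ≠ 0 ∧ y ≠ 2)) : DotReachable b c n :=
    of_le ((fin_three_iff (n := ![x, y, z])).2 (by simpa using h.2.2.2))
      (fun k => by fin_cases k <;> simp [h]) (by simpa [Fin.sum_univ_three] using hsum)
  have := hpos 0; have := hpos 1; have := hpos 2
  -- Take as many dots as possible from the last column, then from the middle one.
  obtain rfl | hc := eq_or_ne c 0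
  · exact key 0 0 0 (by omega)
  by_cases h2 : n 2 = 1
  · by_cases h1 : n 1 = 2
    · exact key (3 * c - 2) 1 1 (by omega)
    · exact key (3 * c - 1 - min (n 1) (3 * c - 2)) (min (n 1) (3 * c - 2)) 1 (by omega)
  · exact key (3 * c - min (n 2) (3 * c) - min (n 1) (3 * c - min (n 2) (3 * c)))
      (min (n 1) (3 * c - min (n 2) (3 * c))) (min (n 2) (3 * c)) (by omega)

end DotReachable

theorem dot_reachable_iff_general {j : ℕ} (b c : ℕ) (n : Fin j → ℕ)
    (hpos : ∀ k, 0 < n k) (hsum : ∑ k, n k = b + 3 * c) :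
    DotReachable b c n ↔
      ¬((b = 0 ∧ j = 2 ∧ (∀ k : Fin j, (k : ℕ) = 1 → n k = 1)) ∨
        (b = 0 ∧ j = 3 ∧ (∀ k : Fin j, (k : ℕ) = 1 → n k = 2) ∧
          (∀ k : Fin j, (k : ℕ) = 2 → n k = 1))) := by
  match j, n, hpos, hsum with
  | 0, n, _, hsum =>
    obtain ⟨rfl, rfl⟩ : b = 0 ∧ c = 0 := by simp at hsum; omega
    simpa using DotReachable.of_sum_eq (f := n) (by simp)
  | 1, n, _, hsum =>
    simpa using (DotReachable.single_three_mul 0 c).of_le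
      (Pi.single_le_iff.2 (by simp at hsum; omega)) hsum
  | 2, n, hpos, hsum =>
    simpa [Fin.forall_fin_two] using DotReachable.fin_two_iff_of_pos hpos (by simpa using hsum)
  | 3, n, hpos, hsum =>
    simpa [Fin.forall_fin_succ] using
      DotReachable.fin_three_iff_of_pos hpos (by simpa [Fin.sum_univ_three] using hsum)
  | j + 4, n, hpos, hsum =>
    obtain ⟨u, hu, h⟩ := DotReachable.exists_le_of_four_le (c := c) (by omega) hpos (by omega)
    simpa using h.of_le hu hsum

/-- A sequence of positive integers `(n_1, …, n_j)` with sum `b + 3c` is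
`(b, c)`-reachable if and only if neither of the following holds:
(1) `b = 0`, `j = 2`, and `n_2 = 1`; (2) `b = 0`, `j = 3`, `n_2 = 2`, and `n_3 = 1`. -/
theorem dot_reachable_iff {j : ℕ} (hj : 0 < j) (b c : ℕ) (n : Fin j → ℕ)
    (hpos : ∀ k, 0 < n k) (hsum : ∑ k, n k = b + 3 * c) :
    DotReachable b c n ↔
      ¬((b = 0 ∧ j = 2 ∧ (∀ k : Fin j, (k : ℕ) = 1 → n k = 1)) ∨
        (b = 0 ∧ j = 3 ∧ (∀ k : Fin j, (k : ℕ) = 1 → n k = 2) ∧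
          (∀ k : Fin j, (k : ℕ) = 2 → n k = 1))) :=
  dot_reachable_iff_general b c n hpos hsum
end

section
/- Let m ≥ 1, c ≥ 0, and N be integers with N ≥ 3c + 3, N ≤ C(m+2, 2), and (N, c, m) ≠ (6, 1, 2). Then there exists a set S of exactly N distinct points of ℙ² over K which contains a conic collection of 3c + 3 points, and such that S imposes independent conditions on forms of degree m. -/
open MvPolynomial

/-- A homogeneous polynomial `F` in three variables vanishes at a point `x` of the
projective plane if it vanishes at a (equivalently, any) nonzero representative. -/
def PVanishes {K : Type*} [Field K] (F : MvPolynomial (Fin 3) K)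
    (x : Projectivization K (Fin 3 → K)) : Prop :=
  MvPolynomial.eval x.rep F = 0

/-- `f` enumerates a conic collection of `3c + 3` distinct points
`q₁, q₂, q₃, p₁, …, p_{3c}` of the projective plane: for every `0 ≤ k ≤ c − 1`, the six
points `q₁, q₂, q₃, p_{3k+1}, p_{3k+2}, p_{3k+3}` lie on a conic, i.e. some nonzero
homogeneous polynomial of degree 2 vanishes at all six of them. -/
def IsConicCollection {K : Type*} [Field K] (c : ℕ)
    (f : Fin (3 * c + 3) → Projectivization K (Fin 3 → K)) : Prop :=
  Function.Injective f ∧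
    ∀ k : Fin c, ∃ F : MvPolynomial (Fin 3) K, F ≠ 0 ∧ F.IsHomogeneous 2 ∧
      PVanishes F (f ⟨0, by omega⟩) ∧ PVanishes F (f ⟨1, by omega⟩) ∧
      PVanishes F (f ⟨2, by omega⟩) ∧
      ∀ i : Fin 3, PVanishes F
        (f ⟨3 + 3 * (k : ℕ) + (i : ℕ), by have := k.isLt; have := i.isLt; omega⟩)

/-- A finite set `S` of points of the projective plane imposes independent conditions
on forms of degree `m` if the map sending a homogeneous polynomial of degree `m` to its
tuple of values at the fixed representatives of the points of `S` is surjective. -/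
def ImposesIndependentConditions {K : Type*} [Field K] (m : ℕ)
    (S : Finset (Projectivization K (Fin 3 → K))) : Prop :=
  ∀ v : Projectivization K (Fin 3 → K) → K, ∃ F : MvPolynomial (Fin 3) K,
    F.IsHomogeneous m ∧ ∀ x ∈ S, MvPolynomial.eval x.rep F = v x

/-!
Identify the lattice point `(a, b)` with `[1 : a : b]`. Every point of the grid `a + b ≤ m` is the
only grid point missed by a suitable union of `m` vertical, horizontal and diagonal lines, so any
set of grid points imposes independent conditions on forms of degree `m`. If `q₁, q₂, q₃` lie on the
x-axis `b = 0`, then a triple lies on a conic with them as soon as it lies on the union of the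
x-axis and one more line. The grid for `m + 3` is the grid for `m` together with three diagonals,
which split into vertical triples and the triple `(m + 2, 0), (m + 2, 1), (m + 3, 0)`; starting
from explicit packings for `m = 3, 4, 5`, this exhibits conic collections of every size allowed
by `3c + 3 ≤ C(m + 2, 2)`.
-/

open Finset

namespace MvPolynomial.IsHomogeneous

variable {σ : Type*} {n : ℕ}

theorem eval_smul {R : Type*} [CommSemiring R] {φ : MvPolynomial σ R} (hφ : φ.IsHomogeneous n)
    (t : R) (x : σ → R) : eval (t • x) φ = t ^ n * eval x φ := by
  rw [eval_eq, eval_eq, mul_sum]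
  refine sum_congr rfl fun s hs => ?_
  simp only [Pi.smul_apply, smul_eq_mul, mul_pow, prod_mul_distrib,
    prod_pow_eq_pow_sum, ← hφ.degree_eq_sum_deg_support hs]
  ring

theorem eval_rep_mk_eq_zero_iff {K : Type*} [Field K] {F : MvPolynomial σ K}
    (hF : F.IsHomogeneous n) {v : σ → K} (hv : v ≠ 0) :
    eval (Projectivization.mk K v hv).rep F = 0 ↔ eval v F = 0 := by
  obtain ⟨u, hu⟩ := Projectivization.exists_smul_eq_mk_rep K v hv
  rw [← hu, Units.smul_def, hF.eval_smul]
  simp [u.ne_zero]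

end MvPolynomial.IsHomogeneous

theorem List.getElem_flatMap_ofFn {α : Type*} {n : ℕ} :
    ∀ (B : List (Fin n → α)) {t : ℕ} (ht : t < B.length) (i : Fin n)
      (h : n * t + i < (B.flatMap List.ofFn).length), (B.flatMap List.ofFn)[n * t + i] = B[t] i
  | [], _, ht, _, _ => absurd ht (Nat.not_lt_zero _)
  | b :: B, 0, _, i, _ => by simp [List.getElem_append_left]
  | b :: B, t + 1, ht, i, h => by
    have hi : n * (t + 1) + i = n + (n * t + i) := by ring
    simp only [hi, List.flatMap_cons]
    rw [List.getElem_append_right (by simp)]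
    simp only [List.length_ofFn, Nat.add_sub_cancel_left, List.getElem_cons_succ]
    exact List.getElem_flatMap_ofFn B (Nat.lt_of_succ_lt_succ ht) i _

namespace PlaneGrid

def grid (m : ℕ) : Finset (ℕ × ℕ) := (range (m + 1)).biUnion antidiagonal

theorem mem_grid {m : ℕ} {p : ℕ × ℕ} : p ∈ grid m ↔ p.1 + p.2 ≤ m := by
  simp [grid]

theorem card_grid (m : ℕ) : #(grid m) = (m + 2).choose 2 := by
  rw [grid, card_biUnion fun d _ d' _ hdd' => disjoint_left.2 fun p hp hp' => hdd' <| by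
    rw [HasAntidiagonal.mem_antidiagonal] at hp hp'; omega]
  simpa using Nat.sum_range_add_choose m 1

variable {K : Type*} [Field K]

theorem imposesIndependentConditions_of_separating {m : ℕ}
    {S : Finset (Projectivization K (Fin 3 → K))}
    (hsep : ∀ x ∈ S, ∃ F : MvPolynomial (Fin 3) K, F.IsHomogeneous m ∧ eval x.rep F ≠ 0 ∧
      ∀ y ∈ S, y ≠ x → eval y.rep F = 0) :
    ImposesIndependentConditions m S := by
  choose! F hFm hFx hFy using hsep
  intro v
  refine ⟨∑ x ∈ S, C (v x / eval x.rep (F x)) * F x,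
    IsHomogeneous.sum _ _ _ fun x hx => (hFm x hx).C_mul _, fun y hy => ?_⟩
  rw [map_sum, sum_eq_single_of_mem y hy fun x hx hxy => by simp [hFy x hx y hy hxy.symm]]
  simp [hFx y hy]

section LinearForm

variable {σ : Type*} [Fintype σ]

noncomputable def linearForm (w : σ → K) : MvPolynomial σ K := ∑ i, C (w i) * X i

theorem isHomogeneous_linearForm (w : σ → K) : (linearForm w).IsHomogeneous 1 :=
  IsHomogeneous.sum _ _ _ fun i _ => isHomogeneous_C_mul_X _ i

theorem isHomogeneous_prod_linearForm {ι : Type*} (s : Finset ι) (w : ι → σ → K) :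
    (∏ i ∈ s, linearForm (w i)).IsHomogeneous #s := by
  simpa using IsHomogeneous.prod s _ _ fun i _ => isHomogeneous_linearForm (w i)

@[simp]
theorem eval_linearForm (w v : σ → K) : eval v (linearForm w) = w ⬝ᵥ v := by
  simp [linearForm, dotProduct]

theorem linearForm_ne_zero {w : σ → K} (hw : w ≠ 0) : linearForm w ≠ 0 := by
  classical
  contrapose! hw
  ext i
  simpa using congrArg (eval (Pi.single i 1)) hw

end LinearForm

def gridVec (p : ℕ × ℕ) : Fin 3 → K := ![1, p.1, p.2]

theorem gridVec_ne_zero (p : ℕ × ℕ) : (gridVec p : Fin 3 → K) ≠ 0 := fun h => by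
  simpa [gridVec] using congrFun h 0

noncomputable def gridPoint (p : ℕ × ℕ) : Projectivization K (Fin 3 → K) :=
  Projectivization.mk K (gridVec p) (gridVec_ne_zero p)

theorem gridPoint_injective [CharZero K] : Function.Injective (gridPoint (K := K)) := by
  intro p q h
  obtain ⟨u, hu⟩ := (Projectivization.mk_eq_mk_iff _ _ _ _ _).1 h
  have hu1 : (u : K) = 1 := by simpa [gridVec, Units.smul_def] using congrFun hu 0
  rw [Units.smul_def, hu1, one_smul] at hu
  have h1 := congrFun hu 1
  have h2 := congrFun hu 2
  simp [gridVec] at h1 h2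
  exact Prod.ext h1.symm h2.symm

theorem eval_gridVec_linearForm (w : Fin 3 → K) (p : ℕ × ℕ) :
    eval (gridVec p) (linearForm w) = w 0 + w 1 * p.1 + w 2 * p.2 := by
  simp [gridVec, dotProduct, Fin.sum_univ_three]

/-- The lines `a = i` (`i < p.1`), `b = j` (`j < p.2`) and `a + b = d` (`p.1 + p.2 < d ≤ m`)
cover every point of the grid `a + b ≤ m` except `p`. -/
noncomputable def separator (m : ℕ) (p : ℕ × ℕ) : MvPolynomial (Fin 3) K :=
  (∏ i ∈ range p.1, linearForm ![-(i : K), 1, 0]) *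
    (∏ j ∈ range p.2, linearForm ![-(j : K), 0, 1]) *
    ∏ d ∈ Ioc (p.1 + p.2) m, linearForm ![-(d : K), 1, 1]

theorem isHomogeneous_separator {m : ℕ} {p : ℕ × ℕ} (hp : p.1 + p.2 ≤ m) :
    (separator m p : MvPolynomial (Fin 3) K).IsHomogeneous m := by
  have h := ((isHomogeneous_prod_linearForm (range p.1) fun i : ℕ => ![-(i : K), 1, 0]).mul
    (isHomogeneous_prod_linearForm (range p.2) fun j : ℕ => ![-(j : K), 0, 1])).mul
    (isHomogeneous_prod_linearForm (Ioc (p.1 + p.2) m) fun d : ℕ => ![-(d : K), 1, 1])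
  rwa [card_range, card_range, Nat.card_Ioc, Nat.add_sub_cancel' hp] at h

theorem eval_separator (m : ℕ) (p q : ℕ × ℕ) :
    eval (gridVec q) (separator m p : MvPolynomial (Fin 3) K) =
      (∏ i ∈ range p.1, ((q.1 : K) - i)) * (∏ j ∈ range p.2, ((q.2 : K) - j)) *
        ∏ d ∈ Ioc (p.1 + p.2) m, ((q.1 + q.2 : ℕ) - d : K) := by
  simp only [separator, map_mul, map_prod, eval_gridVec_linearForm]
  congr 1; congr 1
  all_goals refine prod_congr rfl fun i _ => ?_
  all_goals simp; ring

theorem eval_separator_self_ne_zero [CharZero K] (m : ℕ) (p : ℕ × ℕ) :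
    eval (gridVec p) (separator m p : MvPolynomial (Fin 3) K) ≠ 0 := by
  simp only [eval_separator, ne_eq, mul_eq_zero, prod_eq_zero_iff, sub_eq_zero, Nat.cast_inj,
    mem_range, mem_Ioc, not_or, not_exists, not_and]
  refine ⟨⟨?_, ?_⟩, ?_⟩ <;> intro i hi <;> omega

theorem eval_separator_eq_zero (m : ℕ) {p q : ℕ × ℕ} (hq : q.1 + q.2 ≤ m) (hqp : q ≠ p) :
    eval (gridVec q) (separator m p : MvPolynomial (Fin 3) K) = 0 := by
  simp only [eval_separator, mul_eq_zero, prod_eq_zero_iff, sub_eq_zero, mem_range, mem_Ioc]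
  by_cases h1 : q.1 < p.1
  · exact Or.inl (Or.inl ⟨q.1, h1, rfl⟩)
  by_cases h2 : q.2 < p.2
  · exact Or.inl (Or.inr ⟨q.2, h2, rfl⟩)
  have : p.1 + p.2 < q.1 + q.2 := by
    rcases p with ⟨a, b⟩; rcases q with ⟨a', b'⟩
    simp only [ne_eq, Prod.mk.injEq] at hqp h1 h2 ⊢
    omega
  exact Or.inr ⟨q.1 + q.2, ⟨this, hq⟩, rfl⟩

theorem imposesIndependentConditions_image_gridPoint [CharZero K]
    [DecidableEq (Projectivization K (Fin 3 → K))] {m : ℕ} {T : Finset (ℕ × ℕ)} (hT : T ⊆ grid m) :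
    ImposesIndependentConditions m (T.image (gridPoint (K := K))) := by
  refine imposesIndependentConditions_of_separating fun x hx => ?_
  obtain ⟨p, hp, rfl⟩ := mem_image.1 hx
  have hsep := isHomogeneous_separator (K := K) (mem_grid.1 (hT hp))
  refine ⟨separator m p, hsep, ?_, fun y hy hyp => ?_⟩
  · rw [gridPoint, Ne, hsep.eval_rep_mk_eq_zero_iff]
    exact eval_separator_self_ne_zero m p
  · obtain ⟨q, hq, rfl⟩ := mem_image.1 hy
    rw [gridPoint, hsep.eval_rep_mk_eq_zero_iff]
    exact eval_separator_eq_zero m (mem_grid.1 (hT hq)) (fun h => hyp (h ▸ rfl))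

def OnXAxisUnionLine (s : Set (ℕ × ℕ)) : Prop :=
  ∃ w : Fin 3 → ℤ, w ≠ 0 ∧ ∀ p ∈ s, p.2 = 0 ∨ w 0 + w 1 * p.1 + w 2 * p.2 = 0

theorem OnXAxisUnionLine.mono {s t : Set (ℕ × ℕ)} (ht : OnXAxisUnionLine t)
    (hst : ∀ p ∈ s, p ∈ t ∨ p.2 = 0) : OnXAxisUnionLine s := by
  obtain ⟨w, hw, ht⟩ := ht
  refine ⟨w, hw, fun p hp => ?_⟩
  rcases hst p hp with h | h
  · exact ht p h
  · exact Or.inl h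

theorem onXAxisUnionLine_of_fst_eq {s : Set (ℕ × ℕ)} (a : ℕ) (h : ∀ p ∈ s, p.2 = 0 ∨ p.1 = a) :
    OnXAxisUnionLine s := by
  refine ⟨![-a, 1, 0], fun hw => by simpa using congrFun hw 1, fun p hp => ?_⟩
  rcases h p hp with h | h
  · exact Or.inl h
  · right; simp [h]

theorem onXAxisUnionLine_of_snd_le_one {s : Set (ℕ × ℕ)} (h : ∀ p ∈ s, p.2 ≤ 1) :
    OnXAxisUnionLine s := by
  refine ⟨![-1, 0, 1], fun hw => by simpa using congrFun hw 2, fun p hp => ?_⟩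
  rcases Nat.le_one_iff_eq_zero_or_eq_one.1 (h p hp) with h | h
  · exact Or.inl h
  · right; simp [h]

theorem OnXAxisUnionLine.exists_conic [CharZero K] {s : Set (ℕ × ℕ)} (h : OnXAxisUnionLine s) :
    ∃ F : MvPolynomial (Fin 3) K, F ≠ 0 ∧ F.IsHomogeneous 2 ∧
      ∀ p ∈ s, PVanishes F (gridPoint p) := by
  obtain ⟨w, hw, hs⟩ := h
  have hw' : (fun i => (w i : K)) ≠ 0 := fun h => hw (funext fun i => by simpa using congrFun h i)
  have hF : (X 2 * linearForm fun i => (w i : K)).IsHomogeneous 2 :=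
    (isHomogeneous_X K 2).mul (isHomogeneous_linearForm _)
  refine ⟨_, mul_ne_zero (X_ne_zero 2) (linearForm_ne_zero hw'), hF, fun p hp => ?_⟩
  rw [PVanishes, gridPoint, hF.eval_rep_mk_eq_zero_iff, map_mul, eval_X, eval_gridVec_linearForm]
  rcases hs p hp with h | h
  · simp [gridVec, h]
  · exact mul_eq_zero_of_right _ (by exact_mod_cast h)

/-- The index set `i < 3 ∨ i / 3 = k + 1` is `{0, 1, 2, 3k + 3, 3k + 4, 3k + 5}`. -/
def IsAxisLineCollection (c : ℕ) (g : Fin (3 * c + 3) → ℕ × ℕ) : Prop :=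
  Function.Injective g ∧
    ∀ k : Fin c, OnXAxisUnionLine (g '' {i | (i : ℕ) < 3 ∨ (i : ℕ) / 3 = k + 1})

theorem IsAxisLineCollection.isConicCollection [CharZero K] {c : ℕ} {g : Fin (3 * c + 3) → ℕ × ℕ}
    (hg : IsAxisLineCollection c g) : IsConicCollection c (gridPoint (K := K) ∘ g) := by
  refine ⟨gridPoint_injective.comp hg.1, fun k => ?_⟩
  obtain ⟨F, hF0, hF2, hF⟩ := (hg.2 k).exists_conic (K := K)
  have hvan (i : Fin (3 * c + 3)) (hi : (i : ℕ) < 3 ∨ (i : ℕ) / 3 = k + 1) :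
      PVanishes F (gridPoint (g i)) := hF _ ⟨i, hi, rfl⟩
  exact ⟨F, hF0, hF2, hvan _ (by simp), hvan _ (by simp), hvan _ (by simp),
    fun i => hvan _ (Or.inr (by simp only; omega))⟩

def columnBlock (a b : ℕ) : Fin 3 → ℕ × ℕ := fun i => (a, b + i)

def cornerBlock (n : ℕ) : Fin 3 → ℕ × ℕ := ![(n + 1, 0), (n + 1, 1), (n + 2, 0)]

/-- The lattice points on the diagonals `a + b = n, n + 1, n + 2`, cut into blocks of three. -/
def strip (n : ℕ) : List (Fin 3 → ℕ × ℕ) :=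
  cornerBlock n :: (List.range (n + 1)).map fun a => columnBlock a (n - a)

theorem onXAxisUnionLine_columnBlock (a b : ℕ) : OnXAxisUnionLine (Set.range (columnBlock a b)) :=
  onXAxisUnionLine_of_fst_eq a (by simp [columnBlock])

theorem length_strip (n : ℕ) : (strip n).length = n + 2 := by simp [strip]

theorem onXAxisUnionLine_of_mem_strip {n : ℕ} {b : Fin 3 → ℕ × ℕ} (hb : b ∈ strip n) :
    OnXAxisUnionLine (Set.range b) := by
  simp only [strip, List.mem_cons, List.mem_map] at hb
  rcases hb with rfl | ⟨a, -, rfl⟩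
  · exact onXAxisUnionLine_of_fst_eq (n + 1) (by simp [cornerBlock])
  · exact onXAxisUnionLine_columnBlock _ _

theorem mem_flatMap_strip {n : ℕ} {p : ℕ × ℕ} (hp : p ∈ (strip n).flatMap List.ofFn) :
    n ≤ p.1 + p.2 ∧ p.1 + p.2 ≤ n + 2 := by
  simp only [strip, List.flatMap_cons, List.mem_append, List.mem_ofFn, List.mem_flatMap,
    List.mem_map, List.mem_range] at hp
  rcases hp with ⟨i, rfl⟩ | ⟨_, ⟨a, ha, rfl⟩, i, rfl⟩
  · fin_cases i <;> simp [cornerBlock, add_assoc]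
  · simp only [columnBlock]; omega

theorem nodup_flatMap_strip (n : ℕ) : ((strip n).flatMap List.ofFn).Nodup := by
  rw [List.nodup_flatMap, strip, List.pairwise_cons, List.pairwise_map]
  refine ⟨fun b hb => ?_, fun b hb => ?_, List.pairwise_lt_range.imp fun {a a'} haa' => ?_⟩
  · rw [List.nodup_ofFn]
    simp only [List.mem_cons, List.mem_map] at hb
    rcases hb with rfl | ⟨a, -, rfl⟩
    · intro i j
      fin_cases i <;> fin_cases j <;> simp [cornerBlock]
    · intro i j h
      simpa [columnBlock, Fin.ext_iff] using h
  · obtain ⟨a, ha, rfl⟩ := List.mem_map.1 hb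
    simp only [Function.onFun, List.disjoint_left, List.mem_ofFn, List.mem_range] at ha ⊢
    rintro _ ⟨i, rfl⟩ ⟨j, hj⟩
    fin_cases i <;> simp [cornerBlock, columnBlock] at hj <;> omega
  · simp only [Function.onFun, List.disjoint_left, List.mem_ofFn]
    rintro _ ⟨i, rfl⟩ ⟨j, hj⟩
    simp only [columnBlock, Prod.mk.injEq] at hj
    omega

/-- `q` stands for `q₁, q₂, q₃` and the blocks `bs` for the triples
`p_{3k+1}, p_{3k+2}, p_{3k+3}`. -/
structure IsAxisPacking (m : ℕ) (q : Fin 3 → ℕ × ℕ) (bs : List (Fin 3 → ℕ × ℕ)) : Prop where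
  nodup : ((q :: bs).flatMap List.ofFn).Nodup
  le_of_mem : ∀ p ∈ (q :: bs).flatMap List.ofFn, p.1 + p.2 ≤ m
  snd_eq_zero : ∀ i, (q i).2 = 0
  onXAxisUnionLine : ∀ b ∈ bs, OnXAxisUnionLine (Set.range b)

theorem IsAxisPacking.append_strip {m : ℕ} {q : Fin 3 → ℕ × ℕ} {bs : List (Fin 3 → ℕ × ℕ)}
    (h : IsAxisPacking m q bs) : IsAxisPacking (m + 3) q (bs ++ strip (m + 1)) := by
  have hpts : ((q :: (bs ++ strip (m + 1))).flatMap List.ofFn) =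
      (q :: bs).flatMap List.ofFn ++ (strip (m + 1)).flatMap List.ofFn := by
    simp
  refine ⟨?_, ?_, h.snd_eq_zero, ?_⟩
  · rw [hpts, List.nodup_append]
    refine ⟨h.nodup, nodup_flatMap_strip _, fun p hp p' hp' hpp' => ?_⟩
    have := h.le_of_mem p hp
    have := (mem_flatMap_strip hp').1
    subst hpp'
    omega
  · rw [hpts]
    intro p hp
    rcases List.mem_append.1 hp with hp | hp
    · have := h.le_of_mem p hp; omega
    · have := (mem_flatMap_strip hp).2; omega
  · intro b hb
    rcases List.mem_append.1 hb with hb | hb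
    · exact h.onXAxisUnionLine b hb
    · exact onXAxisUnionLine_of_mem_strip hb

theorem isAxisPacking_three :
    IsAxisPacking 3 ![(0, 0), (2, 0), (3, 0)] [columnBlock 0 1, columnBlock 1 0] where
  nodup := by decide
  le_of_mem := by decide
  snd_eq_zero := by decide
  onXAxisUnionLine := by simp [onXAxisUnionLine_columnBlock]

theorem isAxisPacking_four :
    IsAxisPacking 4 ![(0, 0), (3, 0), (4, 0)]
      [columnBlock 0 2, columnBlock 1 1, columnBlock 2 0, ![(1, 0), (0, 1), (3, 1)]] where
  nodup := by decide
  le_of_mem := by decide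
  snd_eq_zero := by decide
  onXAxisUnionLine := by
    simp only [List.mem_cons, List.not_mem_nil, or_false, forall_eq_or_imp, forall_eq,
      onXAxisUnionLine_columnBlock, true_and]
    exact onXAxisUnionLine_of_snd_le_one (by simp)

theorem isAxisPacking_five :
    IsAxisPacking 5 ![(0, 0), (4, 0), (5, 0)]
      [columnBlock 0 3, columnBlock 1 2, columnBlock 2 1, columnBlock 3 0,
        ![(1, 0), (0, 1), (0, 2)], ![(2, 0), (1, 1), (4, 1)]] where
  nodup := by decide
  le_of_mem := by decide
  snd_eq_zero := by decide
  onXAxisUnionLine := by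
    simp only [List.mem_cons, List.not_mem_nil, or_false, forall_eq_or_imp, forall_eq,
      onXAxisUnionLine_columnBlock, true_and]
    exact ⟨onXAxisUnionLine_of_fst_eq 0 (by simp),
      onXAxisUnionLine_of_snd_le_one (by simp)⟩

theorem choose_two_add_three (n : ℕ) : (n + 3).choose 2 = n.choose 2 + 3 * n + 3 := by
  simp [Nat.choose_succ_succ', Nat.choose_one_right]
  omega

theorem exists_isAxisPacking :
    ∀ m, 3 ≤ m → ∃ q bs, IsAxisPacking m q bs ∧ (m + 2).choose 2 ≤ 3 * bs.length + 4
  | 3, _ => ⟨_, _, isAxisPacking_three, by decide⟩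
  | 4, _ => ⟨_, _, isAxisPacking_four, by decide⟩
  | 5, _ => ⟨_, _, isAxisPacking_five, by decide⟩
  | m + 6, _ => by
    obtain ⟨q, bs, h, hlen⟩ := exists_isAxisPacking (m + 3) (by omega)
    have hchoose : (m + 6 + 2).choose 2 = (m + 3 + 2).choose 2 + 3 * (m + 5) + 3 :=
      choose_two_add_three (m + 5)
    refine ⟨q, _, h.append_strip, ?_⟩
    rw [List.length_append, length_strip, hchoose]
    omega

theorem IsAxisPacking.exists_isAxisLineCollection {m c : ℕ} {q : Fin 3 → ℕ × ℕ}
    {bs : List (Fin 3 → ℕ × ℕ)} (h : IsAxisPacking m q bs) (hc : c ≤ bs.length) :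
    ∃ g, IsAxisLineCollection c g ∧ ∀ i, g i ∈ grid m := by
  have hlen : ((q :: bs).flatMap List.ofFn).length = 3 * (bs.length + 1) := by
    simp [List.length_flatMap]; omega
  refine ⟨fun j => ((q :: bs).flatMap List.ofFn)[(j : ℕ)]'(by have := j.isLt; omega),
    ⟨fun j j' hjj' => Fin.ext (h.nodup.getElem_inj_iff.1 hjj'), fun k => ?_⟩,
    fun j => mem_grid.2 (h.le_of_mem _ (List.getElem_mem _))⟩
  refine (h.onXAxisUnionLine _ (List.getElem_mem (k.2.trans_le hc))).mono ?_
  rintro _ ⟨j, hj | hj, rfl⟩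
  · have hq := List.getElem_flatMap_ofFn (q :: bs) (t := 0) (by simp) ⟨j, hj⟩ (by simp; omega)
    simp only [mul_zero, zero_add, List.getElem_cons_zero] at hq
    simp only [hq, h.snd_eq_zero, or_true]
  · have hb := List.getElem_flatMap_ofFn (q :: bs) (t := k + 1) (by simp; omega)
      ⟨j % 3, by omega⟩ (by simp only; have := j.isLt; omega)
    simp only [show 3 * ((k : ℕ) + 1) + j % 3 = j by omega, List.getElem_cons_succ] at hb
    simp only [hb, Set.mem_range_self, true_or]

theorem exists_isAxisLineCollection {m c : ℕ} (hm : 1 ≤ m) (hc : 3 * c + 3 ≤ (m + 2).choose 2)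
    (hexc : ¬(m = 2 ∧ c = 1)) : ∃ g, IsAxisLineCollection c g ∧ ∀ i, g i ∈ grid m := by
  rcases le_or_gt 3 m with hm3 | hm3
  · obtain ⟨q, bs, h, hlen⟩ := exists_isAxisPacking m hm3
    exact h.exists_isAxisLineCollection (by omega)
  · obtain rfl : c = 0 := by
      interval_cases m <;> simp [Nat.choose] at hc hexc <;> omega
    refine ⟨![(0, 0), (1, 0), (0, 1)], ⟨by decide, fun k => k.elim0⟩, fun i => ?_⟩
    fin_cases i <;> simp [mem_grid] <;> omega

end PlaneGrid

theorem exists_points_with_conic_collection_independent_conditions_general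
    {K : Type*} [Field K] [CharZero K]
    (m c N : ℕ) (hm : 1 ≤ m) (hN3 : 3 * c + 3 ≤ N)
    (hNm : N ≤ Nat.choose (m + 2) 2) (hexc : ¬(N = 6 ∧ c = 1 ∧ m = 2)) :
    ∃ S : Finset (Projectivization K (Fin 3 → K)), S.card = N ∧
      (∃ f : Fin (3 * c + 3) → Projectivization K (Fin 3 → K),
        IsConicCollection c f ∧ ∀ i, f i ∈ S) ∧
      ImposesIndependentConditions m S := by
  classical
  have hmc : ¬(m = 2 ∧ c = 1) := by
    rintro ⟨rfl, rfl⟩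
    exact hexc ⟨le_antisymm hNm hN3, rfl, rfl⟩
  obtain ⟨g, hg, hgm⟩ := PlaneGrid.exists_isAxisLineCollection hm (hN3.trans hNm) hmc
  obtain ⟨T, hgT, hTm, hTN⟩ := exists_subsuperset_card_eq (n := N)
    (image_subset_iff.2 fun i _ => hgm i)
    (by rwa [card_image_of_injective _ hg.1, card_univ, Fintype.card_fin])
    (by rwa [PlaneGrid.card_grid])
  exact ⟨T.image PlaneGrid.gridPoint,
    by rw [card_image_of_injective _ PlaneGrid.gridPoint_injective, hTN],
    ⟨PlaneGrid.gridPoint ∘ g, hg.isConicCollection, fun i => mem_image_of_mem _ (hgT (by simp))⟩,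
    PlaneGrid.imposesIndependentConditions_image_gridPoint hTm⟩

/-- Let `m ≥ 1`, `c ≥ 0`, and `N` be integers with `N ≥ 3c + 3`, `N ≤ C(m+2, 2)`, and
`(N, c, m) ≠ (6, 1, 2)`. Then there exists a set `S` of exactly `N` distinct points of
`ℙ²` containing a conic collection of `3c + 3` points, such that `S` imposes
independent conditions on forms of degree `m`. -/
theorem exists_points_with_conic_collection_independent_conditions
    {K : Type*} [Field K] [IsAlgClosed K] [CharZero K]
    (m c N : ℕ) (hm : 1 ≤ m) (hN3 : 3 * c + 3 ≤ N)
    (hNm : N ≤ Nat.choose (m + 2) 2) (hexc : ¬(N = 6 ∧ c = 1 ∧ m = 2)) :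
    ∃ S : Finset (Projectivization K (Fin 3 → K)), S.card = N ∧
      (∃ f : Fin (3 * c + 3) → Projectivization K (Fin 3 → K),
        IsConicCollection c f ∧ ∀ i, f i ∈ S) ∧
      ImposesIndependentConditions m S :=
  exists_points_with_conic_collection_independent_conditions_general m c N hm hN3 hNm hexc
end

section
/- Let d, r, m be integers with r ≥ 4, m ≥ 3, d ≥ 2r + 2, and d ≥ C(m+r−1, m). Then there exist positive integers d₁ and d₂ with d = d₁ + d₂ such that d₁ ≥ C(m+r−2, m−1), d₂ ≥ C(m+r−2, m), r·d₁ ≥ r(r−1) + d (i.e., d₁ ≥ r − 1 + d/r), and d₂ ≥ r − 1. Moreover, if m = 3, then d₁ and d₂ can be chosen so that in addition 2r·d₂ ≥ (r−1)·d. -/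
/-!
Write `C₁ = C(m+r-2, m-1)` and `C₂ = C(m+r-2, m)`. Pascal's rule gives `C₁ + C₂ = C(m+r-1, m) ≤ d`,
and `m C₂ = (r-1) C₁`. Take for `d₁` the least value allowed by the two lower bounds on it,
`d₁ = max(C₁, r - 1 + ⌈d/r⌉)`, and `d₂ = d - d₁`. Then `d₂ ≥ C₂` comes down to
`r(r-1) + r C₂ ≤ (r-1) d`, which holds because `(r-1) d ≥ (r-1)(C₁ + C₂) = (m+r-1) C₂` and
`2 C₂ ≥ 2 C(r, 2) = r(r-1)`. For `m = 3` we have `C₁ = C(r+1, 2)` and `d ≥ C(r+2, 3) ≥ r²`, which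
together with `d ≥ 2r + 2` gives `2r d₁ ≤ (r+1) d`.
-/

def firstDegree (r d c : ℕ) : ℕ := max c (r - 1 + d ⌈/⌉ r)

section FirstDegree

variable {r d c c' : ℕ}

lemma mul_sub_one_add_le_mul_firstDegree (hr : 0 < r) :
    r * (r - 1) + d ≤ r * firstDegree r d c :=
  calc r * (r - 1) + d ≤ r * (r - 1) + r * (d ⌈/⌉ r) :=
        Nat.add_le_add_left (le_smul_ceilDiv hr) _
    _ = r * (r - 1 + d ⌈/⌉ r) := (mul_add _ _ _).symm
    _ ≤ r * firstDegree r d c := Nat.mul_le_mul_left _ (le_max_right _ _)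

lemma firstDegree_add_le (hr : 0 < r) (hcd : c + c' ≤ d)
    (h : r * (r - 1) + r * c' ≤ (r - 1) * d) : firstDegree r d c + c' ≤ d := by
  have hle : r * (r - 1 + c') ≤ r * d := by
    rw [mul_add]; exact h.trans (Nat.mul_le_mul_right _ (Nat.sub_le r 1))
  obtain ⟨e, rfl⟩ := Nat.exists_eq_add_of_le (Nat.le_of_mul_le_mul_left hle hr)
  suffices r - 1 + c' + e ≤ r * e by
    have := (ceilDiv_le_iff_le_mul hr).2 this
    unfold firstDegree; omega
  obtain ⟨s, rfl⟩ : ∃ s, r = s + 1 := ⟨r - 1, by omega⟩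
  simp only [Nat.add_sub_cancel] at h ⊢
  nlinarith

lemma two_mul_mul_firstDegree_le (hr : 0 < r) (hc : 2 * r * c ≤ (r + 1) * d)
    (hd : 2 * r + 2 ≤ d) : 2 * r * firstDegree r d c ≤ (r + 1) * d := by
  have hq : r * (d ⌈/⌉ r) + 1 ≤ d + r := by
    have := Nat.mul_div_le (d + r - 1) r
    rw [← Nat.ceilDiv_eq_add_pred_div] at this
    omega
  rw [firstDegree, ← Nat.mul_max_mul_left]
  refine max_le hc ?_
  obtain ⟨s, rfl⟩ : ∃ s, r = s + 1 := ⟨r - 1, by omega⟩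
  simp only [Nat.add_sub_cancel] at hq ⊢
  nlinarith

end FirstDegree

lemma sub_one_mul_le_two_mul_mul_sub {r d f : ℕ} (h : 2 * r * f ≤ (r + 1) * d) :
    (r - 1) * d ≤ 2 * r * (d - f) := by
  rcases Nat.eq_zero_or_pos r with rfl | hr
  · simp
  have hf : f ≤ d := by nlinarith
  zify [hf, hr] at h ⊢
  nlinarith

section Choose

variable {m r : ℕ}

lemma choose_pred_add_choose (hm : 0 < m) (hr : 0 < r) :
    (m + r - 2).choose (m - 1) + (m + r - 2).choose m = (m + r - 1).choose m := by
  have := Nat.choose_succ_succ' (m + r - 2) (m - 1)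
  rw [show m + r - 2 + 1 = m + r - 1 by omega, Nat.sub_add_cancel hm] at this
  exact this.symm

lemma mul_choose_eq_sub_one_mul_choose_pred (hm : 0 < m) :
    m * (m + r - 2).choose m = (r - 1) * (m + r - 2).choose (m - 1) := by
  have := Nat.choose_succ_right_eq (m + r - 2) (m - 1)
  rw [Nat.sub_add_cancel hm, show m + r - 2 - (m - 1) = r - 1 by omega] at this
  rw [mul_comm, this, mul_comm]

lemma mul_sub_one_le_two_mul_choose (hm : 2 ≤ m) (hr : 2 ≤ r) :
    r * (r - 1) ≤ 2 * (m + r - 2).choose m := by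
  have hdesc : r * (r - 1) = 2 * r.choose 2 := by
    simpa [Nat.descFactorial, mul_comm] using Nat.descFactorial_eq_factorial_mul_choose r 2
  rw [hdesc, Nat.choose_symm_of_eq_add (show m + r - 2 = m + (r - 2) by omega),
    Nat.choose_symm_of_eq_add (show r = 2 + (r - 2) by omega)]
  exact Nat.mul_le_mul_left _ (Nat.choose_le_choose _ (by omega))

lemma mul_sub_one_add_mul_choose_le (hm : 3 ≤ m) (hr : 2 ≤ r) :
    r * (r - 1) + r * (m + r - 2).choose m ≤ (r - 1) * (m + r - 1).choose m := by
  rw [← choose_pred_add_choose (by omega) (by omega), mul_add,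
    ← mul_choose_eq_sub_one_mul_choose_pred (by omega)]
  have := mul_sub_one_le_two_mul_choose (by omega : 2 ≤ m) hr
  obtain ⟨s, rfl⟩ : ∃ s, r = s + 1 := ⟨r - 1, by omega⟩
  simp only [Nat.add_sub_cancel] at this ⊢
  nlinarith

end Choose

lemma sq_le_choose_three (r : ℕ) : r ^ 2 ≤ (r + 2).choose 3 := by
  have h₂ := Nat.add_one_mul_choose_eq r 1
  have h₃ := Nat.add_one_mul_choose_eq (r + 1) 2
  rw [Nat.choose_one_right] at h₂
  -- `6 C(r+2, 3) - 6 r² = r (r-1) (r-2)`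
  rcases r with _ | _ | t
  · simp
  · simp
  · nlinarith [Nat.zero_le (t ^ 3)]

/-- Let `d, r, m` be integers with `r ≥ 4`, `m ≥ 3`, `d ≥ 2r + 2`, and
`d ≥ C(m+r−1, m)`. Then there are positive integers `d₁, d₂` with `d = d₁ + d₂`,
`d₁ ≥ C(m+r−2, m−1)`, `d₂ ≥ C(m+r−2, m)`, `r·d₁ ≥ r(r−1) + d` (i.e. `d₁ ≥ r−1+d/r`),
and `d₂ ≥ r − 1`; moreover if `m = 3` they can be chosen so that in addition
`2r·d₂ ≥ (r−1)·d`. -/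
theorem exists_degree_split_ge (d r m : ℕ) (hr : 4 ≤ r) (hm : 3 ≤ m)
    (hd : 2 * r + 2 ≤ d) (hdC : Nat.choose (m + r - 1) m ≤ d) :
    ∃ d₁ d₂ : ℕ, 0 < d₁ ∧ 0 < d₂ ∧ d = d₁ + d₂ ∧
      Nat.choose (m + r - 2) (m - 1) ≤ d₁ ∧ Nat.choose (m + r - 2) m ≤ d₂ ∧
      r * (r - 1) + d ≤ r * d₁ ∧ r - 1 ≤ d₂ ∧
      (m = 3 → (r - 1) * d ≤ 2 * r * d₂) := by
  set C₁ := (m + r - 2).choose (m - 1)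
  set C₂ := (m + r - 2).choose m
  have hsum : C₁ + C₂ ≤ d := (choose_pred_add_choose (by omega) (by omega)).trans_le hdC
  have hsplit : firstDegree r d C₁ + C₂ ≤ d := firstDegree_add_le (by omega) hsum
    ((mul_sub_one_add_mul_choose_le hm (by omega)).trans (Nat.mul_le_mul_left _ hdC))
  have hC₂ : r - 1 ≤ C₂ := by
    have := mul_sub_one_le_two_mul_choose (by omega : 2 ≤ m) (by omega : 2 ≤ r)
    nlinarith
  refine ⟨firstDegree r d C₁, d - firstDegree r d C₁,
    (Nat.choose_pos (by omega)).trans_le (le_max_left _ _), by omega, by omega, le_max_left _ _,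
    by omega, mul_sub_one_add_le_mul_firstDegree (by omega), by omega, ?_⟩
  rintro rfl
  have hC₁ : C₁ * 2 = (r + 1) * r := by
    rw [show C₁ = (r + 1).choose 2 by simp only [C₁]; congr 1; omega]
    simpa using (Nat.add_one_mul_choose_eq r 1).symm
  have hr2 : r ^ 2 ≤ d := (sq_le_choose_three r).trans
    (by rwa [show 3 + r - 1 = r + 2 by omega] at hdC)
  refine sub_one_mul_le_two_mul_mul_sub (two_mul_mul_firstDegree_le (by omega) ?_ hd)
  nlinarith
end

section
/- Let d, r, m be integers with r ≥ 4, m ≥ 3, d ≥ 2r + 2, and d ≤ C(m+r−1, m). Then there exist positive integers d₁ and d₂ with d = d₁ + d₂ such that d₁ ≤ C(m+r−2, m−1), d₂ ≤ C(m+r−2, m), r·d₁ ≥ r(r−1) + d (i.e., d₁ ≥ r − 1 + d/r), and d₂ ≥ r − 1. Moreover, if m = 3, then d₁ and d₂ can be chosen so that in addition 2r·d₂ ≥ (r−1)·d. -/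
/-!
Write `c₁ = C(m+r-2, m-1)` and `c₂ = C(m+r-2, m)`; Pascal's rule gives `c₁ + c₂ = C(m+r-1, m) ≥ d`,
and `m c₂ = (r-1) c₁`. Let `a = r - 1 + ⌈d/r⌉`, the least `d₁` with `r d₁ ≥ r(r-1) + d`, and take
`d₁ = max a (d - c₂)`, so that `d₂ = d - d₁ ≤ c₂`. Then `d₁ ≤ c₁` because `r c₁ = c₁ + m c₂ ≥ d + 2 c₂`
and `2 c₂ ≥ 2 C(r+1, 3) ≥ (r-1)(r+1)` absorbs the rounding in `a`; the margin `d ≥ 2r + 2` gives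
`d₂ ≥ r - 1` and, for `m = 3`, `2r d₂ ≥ (r-1) d`.
-/

namespace Nat

theorem exists_le_mul_lt_add (d : ℕ) {r : ℕ} (hr : 0 < r) : ∃ q, d ≤ r * q ∧ r * q < d + r := by
  have := div_add_mod (d + r - 1) r
  have := mod_lt (d + r - 1) hr
  exact ⟨(d + r - 1) / r, by omega, by omega⟩

theorem choose_three_le_choose_add {m : ℕ} (n : ℕ) (hm : 3 ≤ m) :
    (n + 3).choose 3 ≤ (m + n).choose m :=
  calc (n + 3).choose 3 = (n + 3).choose n := choose_symm_add.symm
    _ ≤ (m + n).choose n := choose_le_choose n (by omega)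
    _ = (m + n).choose m := choose_symm_add.symm

theorem six_mul_choose_three (n : ℕ) : 6 * (n + 3).choose 3 = (n + 3) * (n + 2) * (n + 1) := by
  rw [show 6 = (3)! from rfl, ← descFactorial_eq_factorial_mul_choose]
  simp only [descFactorial_succ, reduceSubDiff, Nat.add_one_sub_one, tsub_zero, descFactorial_zero,
    mul_one]
  ring

theorem choose_pred_add_choose (n : ℕ) {m : ℕ} (hm : 0 < m) :
    n.choose (m - 1) + n.choose m = (n + 1).choose m := by
  obtain ⟨k, rfl⟩ := exists_eq_add_one_of_ne_zero hm.ne'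
  exact (choose_succ_succ' n k).symm

theorem choose_mul_eq_choose_pred_mul (n : ℕ) {m : ℕ} (hm : 0 < m) :
    n.choose m * m = n.choose (m - 1) * (n + 1 - m) := by
  obtain ⟨k, rfl⟩ := exists_eq_add_one_of_ne_zero hm.ne'
  simpa using choose_succ_right_eq n k

theorem pred_mul_succ_le_two_mul_choose {m r : ℕ} (hm : 3 ≤ m) (hr : 3 ≤ r) :
    (r - 1) * (r + 1) ≤ 2 * (m + r - 2).choose m := by
  obtain ⟨n, rfl⟩ : ∃ n, r = n + 2 := ⟨r - 2, by omega⟩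
  rw [show m + (n + 2) - 2 = m + n by omega, show n + 2 - 1 = n + 1 by omega]
  have hcube := six_mul_choose_three n
  have hmono := choose_three_le_choose_add n hm
  nlinarith

end Nat

theorem exists_degree_split_of_le_add {d r c₁ c₂ : ℕ} (hr : 2 ≤ r) (hd : 2 * r + 2 ≤ d)
    (hdc : d ≤ c₁ + c₂) (hc₁ : d + (r - 1) * (r + 1) ≤ r * c₁) (hc₂ : r - 1 ≤ c₂) :
    ∃ d₁ d₂ : ℕ, 0 < d₁ ∧ 0 < d₂ ∧ d = d₁ + d₂ ∧ d₁ ≤ c₁ ∧ d₂ ≤ c₂ ∧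
      r * (r - 1) + d ≤ r * d₁ ∧ r - 1 ≤ d₂ ∧
      ((r - 1) * (c₁ + c₂) ≤ 2 * r * c₂ → (r - 1) * d ≤ 2 * r * d₂) := by
  obtain ⟨q, hdq, hqd⟩ := Nat.exists_le_mul_lt_add d (by omega : 0 < r)
  obtain ⟨p, rfl⟩ : ∃ p, r = p + 1 := ⟨r - 1, by omega⟩
  simp only [Nat.add_sub_cancel] at hc₁ hc₂ ⊢
  have ha_le : p + q ≤ c₁ := by nlinarith
  have ha_add_le : p + q + p ≤ d := by nlinarith
  have ha_mul_le : 2 * (p + 1) * (p + q) ≤ (p + 2) * d := by nlinarith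
  refine ⟨max (p + q) (d - c₂), d - max (p + q) (d - c₂), by omega, by omega, by omega, by omega,
    by omega, ?_, by omega, fun h => ?_⟩
  · nlinarith [le_max_left (p + q) (d - c₂)]
  · rcases le_total (d - c₂) (p + q) with hb | hb
    · obtain ⟨e, rfl⟩ : ∃ e, d = p + q + e := ⟨d - (p + q), by omega⟩
      rw [max_eq_left hb, Nat.add_sub_cancel_left]
      nlinarith
    · rw [max_eq_right hb, show d - (d - c₂) = c₂ by omega]
      nlinarith

theorem exists_degree_split_of_mul_eq {d r m c₁ c₂ : ℕ} (hr : 2 ≤ r) (hm : 3 ≤ m)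
    (hd : 2 * r + 2 ≤ d) (hdc : d ≤ c₁ + c₂) (hmul : c₂ * m = c₁ * (r - 1))
    (hc₂ : (r - 1) * (r + 1) ≤ 2 * c₂) :
    ∃ d₁ d₂ : ℕ, 0 < d₁ ∧ 0 < d₂ ∧ d = d₁ + d₂ ∧ d₁ ≤ c₁ ∧ d₂ ≤ c₂ ∧
      r * (r - 1) + d ≤ r * d₁ ∧ r - 1 ≤ d₂ ∧ (m = 3 → (r - 1) * d ≤ 2 * r * d₂) := by
  have hc₁ : d + (r - 1) * (r + 1) ≤ r * c₁ := by
    obtain ⟨p, rfl⟩ : ∃ p, r = p + 1 := ⟨r - 1, by omega⟩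
    simp only [Nat.add_sub_cancel] at hmul hc₂ ⊢
    nlinarith
  obtain ⟨d₁, d₂, h₁, h₂, hsum, hd₁, hd₂, hlow₁, hlow₂, hthree⟩ :=
    exists_degree_split_of_le_add hr hd hdc hc₁ (by nlinarith)
  refine ⟨d₁, d₂, h₁, h₂, hsum, hd₁, hd₂, hlow₁, hlow₂, fun hm₃ => hthree ?_⟩
  subst hm₃
  obtain ⟨p, rfl⟩ : ∃ p, r = p + 1 := ⟨r - 1, by omega⟩
  simp only [Nat.add_sub_cancel] at hmul ⊢
  nlinarith

/-- Let `d, r, m` be integers with `r ≥ 4`, `m ≥ 3`, `d ≥ 2r + 2`, and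
`d ≤ C(m+r−1, m)`. Then there are positive integers `d₁, d₂` with `d = d₁ + d₂`,
`d₁ ≤ C(m+r−2, m−1)`, `d₂ ≤ C(m+r−2, m)`, `r·d₁ ≥ r(r−1) + d` (i.e. `d₁ ≥ r−1+d/r`),
and `d₂ ≥ r − 1`; moreover if `m = 3` they can be chosen so that in addition
`2r·d₂ ≥ (r−1)·d`. -/
theorem exists_degree_split_le (d r m : ℕ) (hr : 4 ≤ r) (hm : 3 ≤ m)
    (hd : 2 * r + 2 ≤ d) (hdC : d ≤ Nat.choose (m + r - 1) m) :
    ∃ d₁ d₂ : ℕ, 0 < d₁ ∧ 0 < d₂ ∧ d = d₁ + d₂ ∧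
      d₁ ≤ Nat.choose (m + r - 2) (m - 1) ∧ d₂ ≤ Nat.choose (m + r - 2) m ∧
      r * (r - 1) + d ≤ r * d₁ ∧ r - 1 ≤ d₂ ∧
      (m = 3 → (r - 1) * d ≤ 2 * r * d₂) := by
  rw [show m + r - 1 = m + r - 2 + 1 by omega,
    ← Nat.choose_pred_add_choose _ (by omega : 0 < m)] at hdC
  have hmul := Nat.choose_mul_eq_choose_pred_mul (m + r - 2) (by omega : 0 < m)
  rw [show m + r - 2 + 1 - m = r - 1 by omega] at hmul
  exact exists_degree_split_of_mul_eq (by omega) hm hd hdC hmul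
    (Nat.pred_mul_succ_le_two_mul_choose hm (by omega))
end
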